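/- arXiv:1412.1793 — 3 statements merged into one kernel-verified Lean document; each statement's English description precedes it below -/
import Mathlib

section
/- Let d, ℓ, p be integers and G a graph with a fixed total order on its edges. Every d-sparse and d-localized pair A, B in G that has no independent subpair of size p has size at most 2d·p³. -/
attribute [-instance] Sym2.instPartialOrder

open SimpleGraph

variable {V : Type*}

/-- The ball of center `v` and radius `k` in a graph. -/
def gball (G : SimpleGraph V) (v : V) (k : ℕ) : Set V :=
  {w | G.edist v w ≤ (k : ℕ∞)}

/-- `p` precedes or equals `q` in the lexicographic order on walks induced by a total order on
edges, where the edge lists are compared from the last edge to the first. -/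
def WalkLexLE [LinearOrder (Sym2 V)] (G : SimpleGraph V) {x z : V} (p q : G.Walk x z) : Prop :=
  p.edges.reverse = q.edges.reverse ∨ List.Lex (· < ·) p.edges.reverse q.edges.reverse

/-- `p` is the minimum `xz`-path: a path of minimum length which, among the paths of minimum
length, has minimum lexicographic order. -/
def IsMinPath [LinearOrder (Sym2 V)] (G : SimpleGraph V) {x z : V} (p : G.Walk x z) : Prop :=
  p.IsPath ∧ (∀ q : G.Walk x z, p.length ≤ q.length) ∧
    ∀ q : G.Walk x z, q.IsPath → q.length = p.length → WalkLexLE G p q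

/-- `P a b` is the support (vertex list) of the minimum `ab`-path `P_{ab}`, for all
`(a, b) ∈ A × B`. -/
def IsMinPathFamily [LinearOrder (Sym2 V)] (G : SimpleGraph V) (A B : Finset V)
    (P : V → V → List V) : Prop :=
  ∀ a ∈ A, ∀ b ∈ B, ∃ w : G.Walk a b, IsMinPath G w ∧ w.support = P a b

/-- The critical vertex `c_{ab}`: the vertex of `P_{ab}` at distance `ℓ - 3` from `a`. -/
def critA (ℓ : ℕ) (P : V → V → List V) (a b : V) : V :=
  (P a b).getD (ℓ - 3) a

/-- The pre-critical vertex `c⁻_{ab}`: the vertex of `P_{ab}` at distance `ℓ - 4` from `a`. -/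
def precritA (ℓ : ℕ) (P : V → V → List V) (a b : V) : V :=
  (P a b).getD (ℓ - 4) a

/-- The critical vertex `c_{ba}`: the vertex of `P_{ab}` at distance `ℓ - 3` from `b`. -/
def critB (ℓ : ℕ) (P : V → V → List V) (a b : V) : V :=
  (P a b).getD ((P a b).length - (ℓ - 2)) a

/-- The pair `A, B` is `d`-localized: `A` and `B` are disjoint, the vertices of `A ∪ B` are
pairwise at distance at least `ℓ + 1`, and `d(a,b) ≤ 2ℓ - 2^{d+2} - 3` for all
`(a, b) ∈ A × B`. -/
def DLocalizedPair (G : SimpleGraph V) (ℓ d : ℕ) (A B : Finset V) : Prop :=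
  Disjoint A B ∧
  (∀ u ∈ (A : Set V) ∪ (B : Set V), ∀ v ∈ (A : Set V) ∪ (B : Set V), u ≠ v → (ℓ : ℕ∞) + 1 ≤ G.edist u v) ∧
  (∀ a ∈ A, ∀ b ∈ B, G.edist a b + 2 ^ (d + 2) + 3 ≤ 2 * (ℓ : ℕ∞))

/-- The `d`-localized pair `A, B` is independent: for every `(a, b) ∈ A × B`,
`B(c_{ab}, ℓ) ∩ (A ∪ B) = {a, b}` and `B(c_{ba}, ℓ) ∩ (A ∪ B) = {a, b}`. -/
def IndependentPair (G : SimpleGraph V) (ℓ d : ℕ) (A B : Finset V)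
    (P : V → V → List V) : Prop :=
  DLocalizedPair G ℓ d A B ∧
  ∀ a ∈ A, ∀ b ∈ B,
    gball G (critA ℓ P a b) ℓ ∩ ((A : Set V) ∪ (B : Set V)) = {a, b} ∧
    gball G (critB ℓ P a b) ℓ ∩ ((A : Set V) ∪ (B : Set V)) = {a, b}

/-- The root section `RS(a)` of `a ∈ A`: union over `b ∈ B` of the vertices of the
`a`–`c_{ab}` subpaths of `P_{ab}`. -/
def RSA (ℓ : ℕ) (B : Finset V) (P : V → V → List V) (a : V) : Set V :=
  {v | ∃ b ∈ B, v ∈ (P a b).take (ℓ - 2)}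

/-- The root section `RS(b)` of `b ∈ B`: union over `a ∈ A` of the vertices of the
`c_{ba}`–`b` subpaths of `P_{ab}`. -/
def RSB (ℓ : ℕ) (A : Finset V) (P : V → V → List V) (b : V) : Set V :=
  {v | ∃ a ∈ A, v ∈ (P a b).drop ((P a b).length - (ℓ - 2))}

/-- `uv` is an edge of the path whose vertex list is `l`: `u` and `v` are consecutive in `l`. -/
def IsEdgeOfList (l : List V) (u v : V) : Prop :=
  ∃ i : ℕ, (l[i]? = some u ∧ l[i + 1]? = some v) ∨ (l[i]? = some v ∧ l[i + 1]? = some u)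

/-- `uv` is an escape from `a`: an edge with `u ∈ RS(a)`, `v ∉ RS(a)` which is not an edge of
any path `P_{ab}`, `b ∈ B`. -/
def IsEscape (G : SimpleGraph V) (ℓ : ℕ) (B : Finset V) (P : V → V → List V)
    (a u v : V) : Prop :=
  G.Adj u v ∧ u ∈ RSA ℓ B P a ∧ v ∉ RSA ℓ B P a ∧ ∀ b ∈ B, ¬ IsEdgeOfList (P a b) u v

/-- `uv` is an escape from `a` to `a'` for `b`: an escape from `a` whose end `v` lies on
`P_{a'b}`, with `a' ≠ a`. -/
def IsEscapeTo (G : SimpleGraph V) (ℓ : ℕ) (B : Finset V) (P : V → V → List V)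
    (a a' b u v : V) : Prop :=
  IsEscape G ℓ B P a u v ∧ a' ≠ a ∧ v ∈ P a' b

/-- Arc `a → a'` of the escape graph of `b`: there is an escape from `a` to `a'` for `b`. -/
def EscapeArc (G : SimpleGraph V) (ℓ : ℕ) (A B : Finset V) (P : V → V → List V)
    (b a a' : V) : Prop :=
  a ∈ A ∧ a' ∈ A ∧ ∃ u v, IsEscapeTo G ℓ B P a a' b u v

/-- `uv` is a deep escape from `a`: an escape whose beginning `u` is neither a critical vertex
nor a pre-critical vertex. -/
def IsDeepEscape (G : SimpleGraph V) (ℓ : ℕ) (A B : Finset V) (P : V → V → List V)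
    (a u v : V) : Prop :=
  IsEscape G ℓ B P a u v ∧
  ∀ a'' ∈ A, ∀ b'' ∈ B, u ≠ critA ℓ P a'' b'' ∧ u ≠ precritA ℓ P a'' b''

/-- Arc `a → a'` of the deep escape graph of `b`: there is a deep escape from `a` to `a'`
for `b`. -/
def DeepEscapeArc (G : SimpleGraph V) (ℓ : ℕ) (A B : Finset V) (P : V → V → List V)
    (b a a' : V) : Prop :=
  a ∈ A ∧ a' ∈ A ∧ ∃ u v, IsDeepEscape G ℓ A B P a u v ∧ a' ≠ a ∧ v ∈ P a' b

/-- The pair `A, B` has the escape property: for every `b ∈ B`, the deep escape graph of `b` is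
a transitive tournament on `A`. -/
def EscapeProperty (G : SimpleGraph V) (ℓ : ℕ) (A B : Finset V)
    (P : V → V → List V) : Prop :=
  ∀ b ∈ B,
    (∀ a ∈ A, ∀ a' ∈ A, a ≠ a' →
      (DeepEscapeArc G ℓ A B P b a a' ∨ DeepEscapeArc G ℓ A B P b a' a) ∧
      ¬ (DeepEscapeArc G ℓ A B P b a a' ∧ DeepEscapeArc G ℓ A B P b a' a)) ∧
    (∀ a ∈ A, ∀ a' ∈ A, ∀ a'' ∈ A, DeepEscapeArc G ℓ A B P b a a' →
      DeepEscapeArc G ℓ A B P b a' a'' → DeepEscapeArc G ℓ A B P b a a'')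

/-- A set `X` of centers is `q`-sparse (for radius `ℓ`): no vertex of `G` belongs to more than
`q` balls of radius `ℓ` centered at vertices of `X`. -/
def QSparse (G : SimpleGraph V) (ℓ : ℕ) (X : Finset V) (q : ℕ) : Prop :=
  ∀ v : V, {x : V | x ∈ X ∧ v ∈ gball G x ℓ}.ncard ≤ q

lemma getD_irrel (l : List V) (i : ℕ) (h : i < l.length) (d₁ d₂ : V) :
    l.getD i d₁ = l.getD i d₂ := by
  rw [List.getD_eq_getElem l d₁ h, List.getD_eq_getElem l d₂ h]

lemma edist_support_getD (G : SimpleGraph V) {a b : V} (w : G.Walk a b) :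
    ∀ i : ℕ, i ≤ w.length →
      G.edist a (w.support.getD i a) ≤ (i : ℕ∞) ∧
      G.edist (w.support.getD i a) b ≤ ((w.length - i : ℕ) : ℕ∞) := by
  induction w with
  | nil =>
    intro i hi
    simp only [Walk.length_nil, Nat.le_zero] at hi
    subst hi
    simp [Walk.support_nil, edist_self]
  | @cons u v c hadj w ih =>
    intro i hi
    match i with
    | 0 =>
      refine ⟨by simp [Walk.support_cons, edist_self], ?_⟩
      simp only [Walk.support_cons, List.getD_cons_zero, Nat.sub_zero]
      exact SimpleGraph.edist_le (Walk.cons hadj w)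
    | (i+1) =>
      have hi' : i ≤ w.length := by
        simpa [Walk.length_cons] using Nat.succ_le_succ_iff.mp (by simpa [Walk.length_cons] using hi)
      have hlen : i < w.support.length := by
        rw [Walk.length_support]; omega
      have hgd : (Walk.cons hadj w).support.getD (i+1) u = w.support.getD i v := by
        rw [Walk.support_cons, List.getD_cons_succ]
        exact getD_irrel _ _ hlen _ _
      obtain ⟨h1, h2⟩ := ih i hi'
      constructor
      · rw [hgd]
        calc G.edist u (w.support.getD i v)
            ≤ G.edist u v + G.edist v (w.support.getD i v) := SimpleGraph.edist_triangle
          _ ≤ 1 + (i : ℕ∞) := add_le_add (le_of_eq (edist_eq_one_iff_adj.mpr hadj)) h1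
          _ = ((i+1 : ℕ) : ℕ∞) := by push_cast; ring
      · rw [hgd]
        have : (Walk.cons hadj w).length - (i+1) = w.length - i := by
          rw [Walk.length_cons]; omega
        rw [this]
        exact h2

lemma crit_bounds [DecidableEq V] [LinearOrder (Sym2 V)] {G : SimpleGraph V}
    {A B : Finset V} {P : V → V → List V} {ℓ d : ℕ}
    (hP : IsMinPathFamily G A B P) (hloc : DLocalizedPair G ℓ d A B)
    {a b : V} (ha : a ∈ A) (hb : b ∈ B) :
    G.edist (critA ℓ P a b) a ≤ (ℓ : ℕ∞) ∧ G.edist (critA ℓ P a b) b ≤ (ℓ : ℕ∞) ∧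
    G.edist (critB ℓ P a b) a ≤ (ℓ : ℕ∞) ∧ G.edist (critB ℓ P a b) b ≤ (ℓ : ℕ∞) := by
  have hab : a ≠ b := by
    rintro rfl
    exact (Finset.disjoint_left.mp hloc.1 ha) hb
  obtain ⟨w, ⟨hwpath, hwmin, -⟩, hwsupp⟩ := hP a ha b hb
  set L := w.length with hL
  have hDle : G.edist a b ≤ (L : ℕ∞) := SimpleGraph.edist_le w
  have hne : G.edist a b ≠ ⊤ := ne_top_of_le_ne_top (by simp) hDle
  obtain ⟨q, hq⟩ := exists_walk_of_edist_ne_top hne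
  have hE : G.edist a b = (L : ℕ∞) := by
    refine le_antisymm hDle ?_
    rw [← hq]
    exact_mod_cast hwmin q
  have hup : (L : ℕ∞) + 2 ^ (d + 2) + 3 ≤ 2 * (ℓ : ℕ∞) := by
    rw [← hE]; exact hloc.2.2 a ha b hb
  have hupN : L + 2 ^ (d + 2) + 3 ≤ 2 * ℓ := by exact_mod_cast hup
  have h4 : 4 ≤ 2 ^ (d + 2) := by
    calc (4:ℕ) = 2 ^ 2 := rfl
    _ ≤ 2 ^ (d + 2) := Nat.pow_le_pow_right (by norm_num) (by omega)
  have hlow : ℓ + 1 ≤ L := by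
    have := hloc.2.1 a (Set.mem_union_left _ (by simpa using ha))
      b (Set.mem_union_right _ (by simpa using hb)) hab
    rw [hE] at this
    exact_mod_cast this
  have hsupplen : (P a b).length = L + 1 := by
    rw [← hwsupp, Walk.length_support]
  -- critA
  have hcA : critA ℓ P a b = w.support.getD (ℓ - 3) a := by rw [critA, hwsupp]
  obtain ⟨h1, h2⟩ := edist_support_getD G w (ℓ - 3) (by omega)
  -- critB
  have hjdef : (P a b).length - (ℓ - 2) = L - (ℓ - 3) := by omega
  have hcB : critB ℓ P a b = w.support.getD (L - (ℓ - 3)) a := by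
    rw [critB, hjdef, hwsupp]
  obtain ⟨h3, h4'⟩ := edist_support_getD G w (L - (ℓ - 3)) (by omega)
  rw [hcA] at *
  refine ⟨?_, ?_, ?_, ?_⟩
  · rw [edist_comm]
    exact le_trans h1 (by exact_mod_cast Nat.cast_le.mpr (by omega : ℓ - 3 ≤ ℓ))
  · exact le_trans h2 (Nat.cast_le.mpr (by omega : L - (ℓ - 3) ≤ ℓ))
  · rw [hcB, edist_comm]
    exact le_trans h3 (Nat.cast_le.mpr (by omega : L - (ℓ - 3) ≤ ℓ))
  · rw [hcB]
    exact le_trans h4' (Nat.cast_le.mpr (by omega : L - (L - (ℓ - 3)) ≤ ℓ))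

lemma arith_key (d p : ℕ) (hd : 1 ≤ d) (hp : 2 ≤ p) :
    (2*d*p^3+1) * (2*d*p^3+1) * (2*d) *
      ((2*d*p^3+1 - 2).choose (p-2) * (2*d*p^3+1 - 1).choose (p-1)) <
    (2*d*p^3+1).choose p * (2*d*p^3+1).choose p := by
  set n : ℕ := 2*d*p^3+1 with hn
  have hp3 : p ≤ p^3 := Nat.le_self_pow (by norm_num) p
  have hpn : p ≤ 2*d*p^3 := by
    calc p ≤ p^3 := hp3
      _ = 1 * p^3 := (one_mul _).symm
      _ ≤ 2*d*p^3 := Nat.mul_le_mul_right _ (by omega)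
  set C1 := (n-1).choose (p-1) with hC1
  set C2 := (n-2).choose (p-2) with hC2
  set X := n.choose p with hX
  have hC1pos : 0 < C1 := Nat.choose_pos (by omega)
  have hC2pos : 0 < C2 := Nat.choose_pos (by omega)
  have h1 : p * X = n * C1 := by
    have h := Nat.add_one_mul_choose_eq (n-1) (p-1)
    have e1 : n - 1 + 1 = n := by omega
    have e2 : p - 1 + 1 = p := by omega
    rw [e1, e2] at h
    rw [hX, hC1, mul_comm p _, h, mul_comm]
  have h2 : (n-1) * C2 = C1 * (p-1) := by
    have h := Nat.add_one_mul_choose_eq (n-2) (p-2)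
    have e1 : n - 2 + 1 = n - 1 := by omega
    have e2 : p - 2 + 1 = p - 1 := by omega
    rw [e1, e2] at h
    rw [hC1, hC2, ← h, mul_comm]
  have hn1 : n - 1 = 2*d*p^3 := by omega
  have hmul : 2*d*p^2*(p-1) < n - 1 := by
    have h3 : 2*d*p^2*(p-1) < 2*d*p^2*p :=
      (Nat.mul_lt_mul_left (by positivity)).mpr (by omega)
    have h4 : 2*d*p^2*p = 2*d*p^3 := by ring
    rw [hn1]
    omega
  have hkey : 2*d*p^2*C2 < C1 := by
    have hfac : (2*d*p^2*C2) * (p-1) < C1 * (p-1) := by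
      calc (2*d*p^2*C2) * (p-1) = (2*d*p^2*(p-1)) * C2 := by ring
        _ < (n-1) * C2 := (Nat.mul_lt_mul_right hC2pos).mpr hmul
        _ = C1 * (p-1) := h2
    exact (Nat.mul_lt_mul_right (by omega : 0 < p - 1)).mp hfac
  have h5 : (2*d*p^2*C2) * (n*n*C1) < C1 * (n*n*C1) :=
    (Nat.mul_lt_mul_right (by positivity)).mpr hkey
  have hgoal : (n * n * (2*d) * (C2 * C1)) * (p * p) < (X * X) * (p * p) := by
    calc (n * n * (2*d) * (C2 * C1)) * (p * p)
        = (2*d*p^2*C2) * (n*n*C1) := by ring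
      _ < C1 * (n*n*C1) := h5
      _ = (n*C1) * (n*C1) := by ring
      _ = (p*X) * (p*X) := by rw [h1]
      _ = (X * X) * (p * p) := by ring
  exact (Nat.mul_lt_mul_right (by positivity : 0 < p * p)).mp hgoal

lemma count_one [DecidableEq V] (s : Finset V) (p : ℕ) {b : V} (hb : b ∈ s) :
    ((s.powersetCard p).filter fun t => b ∈ t).card ≤ (s.card - 1).choose (p - 1) := by
  have := Finset.card_le_card_of_injOn (f := fun t : Finset V => t.erase b)
    (s := (s.powersetCard p).filter fun t => b ∈ t)
    (t := (s.erase b).powersetCard (p - 1))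
    (by
      intro t ht
      simp only [Finset.mem_coe, Finset.mem_filter, Finset.mem_powersetCard] at ht
      obtain ⟨⟨hsub, hcard⟩, hbt⟩ := ht
      rw [Finset.mem_coe, Finset.mem_powersetCard]
      exact ⟨Finset.erase_subset_erase _ hsub, by rw [Finset.card_erase_of_mem hbt, hcard]⟩)
    (by
      intro t1 h1 t2 h2 he
      simp only [Finset.coe_filter, Set.mem_setOf_eq, Finset.mem_powersetCard] at h1 h2
      have : insert b (t1.erase b) = insert b (t2.erase b) := congrArg (insert b) he
      rwa [Finset.insert_erase h1.2, Finset.insert_erase h2.2] at this)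
  rwa [Finset.card_powersetCard, Finset.card_erase_of_mem hb] at this

lemma count_two [DecidableEq V] (s : Finset V) (p : ℕ) {a z : V} (ha : a ∈ s) (hz : z ∈ s) (haz : a ≠ z) :
    ((s.powersetCard p).filter fun t => a ∈ t ∧ z ∈ t).card ≤ (s.card - 2).choose (p - 2) := by
  have := Finset.card_le_card_of_injOn (f := fun t : Finset V => (t.erase a).erase z)
    (s := (s.powersetCard p).filter fun t => a ∈ t ∧ z ∈ t)
    (t := ((s.erase a).erase z).powersetCard (p - 2))
    (by
      intro t ht
      simp only [Finset.mem_coe, Finset.mem_filter, Finset.mem_powersetCard] at ht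
      obtain ⟨⟨hsub, hcard⟩, hat, hzt⟩ := ht
      rw [Finset.mem_coe, Finset.mem_powersetCard]
      refine ⟨Finset.erase_subset_erase _ (Finset.erase_subset_erase _ hsub), ?_⟩
      rw [Finset.card_erase_of_mem (Finset.mem_erase.mpr ⟨(Ne.symm haz), hzt⟩),
        Finset.card_erase_of_mem hat, hcard]
      omega)
    (by
      intro t1 h1 t2 h2 he
      simp only [Finset.coe_filter, Set.mem_setOf_eq, Finset.mem_powersetCard] at h1 h2
      have e1 : insert a (insert z ((t1.erase a).erase z)) = insert a (insert z ((t2.erase a).erase z)) := congrArg (fun x => insert a (insert z x)) he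
      rwa [Finset.insert_erase (Finset.mem_erase.mpr ⟨Ne.symm haz, h1.2.2⟩),
        Finset.insert_erase h1.2.1,
        Finset.insert_erase (Finset.mem_erase.mpr ⟨Ne.symm haz, h2.2.2⟩),
        Finset.insert_erase h2.2.1] at e1)
  rwa [Finset.card_powersetCard,
    Finset.card_erase_of_mem (Finset.mem_erase.mpr ⟨Ne.symm haz, hz⟩),
    Finset.card_erase_of_mem ha] at this
-- MAIN THEOREM part (appended to defs+lemmas)


/-- Lemma `depol`: every `d`-sparse and `d`-localized pair with no independent
subpair of size `p` has size at most `2d·p³`. -/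
theorem stmt13 (d ℓ p : ℕ) {V : Type*} [DecidableEq V] [LinearOrder (Sym2 V)]
    (G : SimpleGraph V) (A B : Finset V) (P : V → V → List V)
    (hP : IsMinPathFamily G A B P)
    (hloc : DLocalizedPair G ℓ d A B)
    (hsparse : QSparse G ℓ (A ∪ B) d)
    (hnosub : ¬ ∃ A' B' : Finset V, A' ⊆ A ∧ B' ⊆ B ∧ min A'.card B'.card = p ∧
        IndependentPair G ℓ d A' B' P) :
    min A.card B.card ≤ 2 * d * p ^ 3 := by
  classical
  by_contra hlt
  push_neg at hlt
  rw [lt_min_iff] at hlt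
  obtain ⟨hltA, hltB⟩ := hlt
  obtain ⟨a₁, ha₁⟩ : A.Nonempty := Finset.card_pos.mp (by omega)
  obtain ⟨b₁, hb₁⟩ : B.Nonempty := Finset.card_pos.mp (by omega)
  -- d ≥ 1
  have hd : 1 ≤ d := by
    have hsp := hsparse a₁
    have hmem : a₁ ∈ {x : V | x ∈ A ∪ B ∧ a₁ ∈ gball G x ℓ} :=
      ⟨Finset.mem_union_left _ ha₁, by simp [gball, edist_self]⟩
    have hfin : {x : V | x ∈ A ∪ B ∧ a₁ ∈ gball G x ℓ}.Finite :=
      Set.Finite.subset (A ∪ B).finite_toSet (fun x hx => hx.1)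
    have hpos : 0 < ({x : V | x ∈ A ∪ B ∧ a₁ ∈ gball G x ℓ}).ncard :=
      (Set.ncard_pos hfin).mpr ⟨a₁, hmem⟩
    omega
  -- localization restricts
  have hsubloc : ∀ A' B' : Finset V, A' ⊆ A → B' ⊆ B → DLocalizedPair G ℓ d A' B' := by
    intro A' B' hA' hB'
    refine ⟨hloc.1.mono hA' hB', ?_, ?_⟩
    · intro u hu v hv huv
      refine hloc.2.1 u ?_ v ?_ huv
      · rcases hu with h | h
        · exact Set.mem_union_left _ (by exact_mod_cast hA' (by exact_mod_cast h))
        · exact Set.mem_union_right _ (by exact_mod_cast hB' (by exact_mod_cast h))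
      · rcases hv with h | h
        · exact Set.mem_union_left _ (by exact_mod_cast hA' (by exact_mod_cast h))
        · exact Set.mem_union_right _ (by exact_mod_cast hB' (by exact_mod_cast h))
    · intro a ha b hb
      exact hloc.2.2 a (hA' ha) b (hB' hb)
  -- case p = 0
  rcases Nat.eq_zero_or_pos p with hp0 | hppos
  · refine hnosub ⟨∅, ∅, Finset.empty_subset _, Finset.empty_subset _, by simp [hp0], ?_⟩
    exact ⟨hsubloc ∅ ∅ (Finset.empty_subset _) (Finset.empty_subset _),
      fun a ha => absurd ha (Finset.notMem_empty a)⟩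
  -- case p = 1
  rcases eq_or_lt_of_le (Nat.one_le_iff_ne_zero.mpr hppos.ne') with hp1 | hp2
  · refine hnosub ⟨{a₁}, {b₁}, Finset.singleton_subset_iff.mpr ha₁,
      Finset.singleton_subset_iff.mpr hb₁, by simp [← hp1], ?_⟩
    refine ⟨hsubloc _ _ (Finset.singleton_subset_iff.mpr ha₁)
      (Finset.singleton_subset_iff.mpr hb₁), ?_⟩
    intro a ha b hb
    rw [Finset.mem_singleton] at ha hb
    subst ha; subst hb
    obtain ⟨hc1, hc2, hc3, hc4⟩ := crit_bounds hP hloc ha₁ hb₁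
    constructor
    · apply Set.eq_of_subset_of_subset
      · rintro z ⟨_, hz2⟩
        simp only [Finset.coe_singleton, Set.mem_union, Set.mem_singleton_iff] at hz2
        simp only [Set.mem_insert_iff, Set.mem_singleton_iff]
        tauto
      · rintro z hz
        rcases hz with rfl | hz
        · exact ⟨hc1, by simp⟩
        · rw [Set.mem_singleton_iff] at hz; subst hz
          exact ⟨hc2, by simp⟩
    · apply Set.eq_of_subset_of_subset
      · rintro z ⟨_, hz2⟩
        simp only [Finset.coe_singleton, Set.mem_union, Set.mem_singleton_iff] at hz2
        simp only [Set.mem_insert_iff, Set.mem_singleton_iff]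
        tauto
      · rintro z hz
        rcases hz with rfl | hz
        · exact ⟨hc3, by simp⟩
        · rw [Set.mem_singleton_iff] at hz; subst hz
          exact ⟨hc4, by simp⟩
  -- main case p ≥ 2
  set n : ℕ := 2*d*p^3+1 with hn
  obtain ⟨A₀, hA₀sub, hA₀card⟩ := Finset.exists_subset_card_eq (by omega : n ≤ A.card)
  obtain ⟨B₀, hB₀sub, hB₀card⟩ := Finset.exists_subset_card_eq (by omega : n ≤ B.card)
  have hdisj0 : Disjoint A₀ B₀ := hloc.1.mono hA₀sub hB₀sub
  set 𝒜 := A₀.powersetCard p with h𝒜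
  set ℬ := B₀.powersetCard p with hℬ
  set T : Finset ((V × V) × V) := ((A₀ ×ˢ B₀) ×ˢ (A₀ ∪ B₀)).filter (fun t =>
    t.2 ≠ t.1.1 ∧ t.2 ≠ t.1.2 ∧
      (G.edist (critA ℓ P t.1.1 t.1.2) t.2 ≤ (ℓ : ℕ∞) ∨
       G.edist (critB ℓ P t.1.1 t.1.2) t.2 ≤ (ℓ : ℕ∞))) with hT
  set Bad : Finset V → Finset V → Finset ((V × V) × V) := fun A' B' =>
    T.filter (fun t => t.1.1 ∈ A' ∧ t.1.2 ∈ B' ∧ (t.2 ∈ A' ∨ t.2 ∈ B')) with hBad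
  -- ball cardinality bound from sparsity
  have ball_card : ∀ c : V,
      ((A₀ ∪ B₀).filter fun z => G.edist c z ≤ (ℓ : ℕ∞)).card ≤ d := by
    intro c
    set F := (A₀ ∪ B₀).filter fun z => G.edist c z ≤ (ℓ : ℕ∞) with hF
    have hsub : (F : Set V) ⊆ {x : V | x ∈ A ∪ B ∧ c ∈ gball G x ℓ} := by
      intro z hz
      simp only [hF, Finset.coe_filter, Set.mem_setOf_eq, Finset.mem_union] at hz
      refine ⟨?_, ?_⟩
      · rcases hz.1 with h | h
        · exact Finset.mem_union_left _ (hA₀sub h)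
        · exact Finset.mem_union_right _ (hB₀sub h)
      · show G.edist z c ≤ (ℓ : ℕ∞)
        rw [SimpleGraph.edist_comm]; exact hz.2
    have hfin : {x : V | x ∈ A ∪ B ∧ c ∈ gball G x ℓ}.Finite :=
      Set.Finite.subset (A ∪ B).finite_toSet (fun x hx => hx.1)
    calc F.card = (F : Set V).ncard := (Set.ncard_coe_finset _).symm
      _ ≤ ({x : V | x ∈ A ∪ B ∧ c ∈ gball G x ℓ}).ncard := Set.ncard_le_ncard hsub hfin
      _ ≤ d := hsparse c
  -- T is small
  have hTcard : T.card ≤ n * n * (2*d) := by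
    have hfib : T.card = ∑ ab ∈ A₀ ×ˢ B₀, (T.filter fun t => t.1 = ab).card := by
      apply Finset.card_eq_sum_card_fiberwise
      intro t ht
      rw [Finset.mem_coe, hT, Finset.mem_filter] at ht
      exact (Finset.mem_product.mp ht.1).1
    have hfibb : ∀ ab ∈ A₀ ×ˢ B₀, (T.filter fun t => t.1 = ab).card ≤ 2*d := by
      intro ab _
      set c1 := critA ℓ P ab.1 ab.2 with hc1d
      set c2 := critB ℓ P ab.1 ab.2 with hc2d
      set F := (A₀ ∪ B₀).filter fun z =>
        (G.edist c1 z ≤ (ℓ : ℕ∞) ∨ G.edist c2 z ≤ (ℓ : ℕ∞)) with hFd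
      have h1 : (T.filter fun t => t.1 = ab).card ≤ F.card := by
        apply Finset.card_le_card_of_injOn (fun t => t.2)
        · intro t ht
          rw [Finset.mem_coe, Finset.mem_filter, hT, Finset.mem_filter] at ht
          obtain ⟨⟨hbase, _, _, hdist⟩, heq⟩ := ht
          rw [Finset.mem_product] at hbase
          rw [Finset.mem_coe, hFd, Finset.mem_filter]
          refine ⟨hbase.2, ?_⟩
          rw [hc1d, hc2d, ← heq]
          exact hdist
        · intro t1 h1 t2 h2 he
          simp only [Finset.coe_filter, Set.mem_setOf_eq] at h1 h2
          have : t1.1 = t2.1 := by rw [h1.2, h2.2]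
          exact Prod.ext this he
      have h2 : F.card ≤ 2*d := by
        have hsub : F ⊆ ((A₀ ∪ B₀).filter fun z => G.edist c1 z ≤ (ℓ : ℕ∞)) ∪
            ((A₀ ∪ B₀).filter fun z => G.edist c2 z ≤ (ℓ : ℕ∞)) := by
          intro z hz
          rw [hFd, Finset.mem_filter] at hz
          rw [Finset.mem_union, Finset.mem_filter, Finset.mem_filter]
          tauto
        have hb1 := ball_card c1
        have hb2 := ball_card c2
        have := (Finset.card_le_card hsub).trans (Finset.card_union_le _ _)
        omega
      exact h1.trans h2
    calc T.card = ∑ ab ∈ A₀ ×ˢ B₀, (T.filter fun t => t.1 = ab).card := hfib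
      _ ≤ ∑ _ab ∈ A₀ ×ˢ B₀, (2*d) := Finset.sum_le_sum hfibb
      _ = (A₀ ×ˢ B₀).card * (2*d) := by rw [Finset.sum_const, smul_eq_mul]
      _ = n * n * (2*d) := by rw [Finset.card_product, hA₀card, hB₀card]
  -- the key selection
  set Q := (n-2).choose (p-2) * (n-1).choose (p-1) with hQ
  have hkey : ∃ A' ∈ 𝒜, ∃ B' ∈ ℬ, Bad A' B' = ∅ := by
    by_contra hk
    push_neg at hk
    have hone : ∀ A' ∈ 𝒜, ∀ B' ∈ ℬ, 1 ≤ (Bad A' B').card := fun A' hA' B' hB' =>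
      Finset.card_pos.mpr (hk A' hA' B' hB')
    have lower : 𝒜.card * ℬ.card ≤ ∑ A' ∈ 𝒜, ∑ B' ∈ ℬ, (Bad A' B').card := by
      calc 𝒜.card * ℬ.card = ∑ _A' ∈ 𝒜, ∑ _B' ∈ ℬ, 1 := by
            simp [Finset.sum_const, smul_eq_mul]
        _ ≤ _ := Finset.sum_le_sum fun A' hA' => Finset.sum_le_sum fun B' hB' =>
            hone A' hA' B' hB'
    have hswap : ∑ A' ∈ 𝒜, ∑ B' ∈ ℬ, (Bad A' B').card
        = ∑ t ∈ T, ∑ A' ∈ 𝒜, ∑ B' ∈ ℬ,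
            (if t.1.1 ∈ A' ∧ t.1.2 ∈ B' ∧ (t.2 ∈ A' ∨ t.2 ∈ B') then 1 else 0) := by
      calc ∑ A' ∈ 𝒜, ∑ B' ∈ ℬ, (Bad A' B').card
          = ∑ A' ∈ 𝒜, ∑ B' ∈ ℬ, ∑ t ∈ T,
              (if t.1.1 ∈ A' ∧ t.1.2 ∈ B' ∧ (t.2 ∈ A' ∨ t.2 ∈ B') then 1 else 0) := by
            refine Finset.sum_congr rfl fun A' _ => Finset.sum_congr rfl fun B' _ => ?_
            rw [hBad]
            exact Finset.card_filter _ _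
        _ = ∑ A' ∈ 𝒜, ∑ t ∈ T, ∑ B' ∈ ℬ,
              (if t.1.1 ∈ A' ∧ t.1.2 ∈ B' ∧ (t.2 ∈ A' ∨ t.2 ∈ B') then 1 else 0) := by
            exact Finset.sum_congr rfl fun A' _ => Finset.sum_comm
        _ = _ := Finset.sum_comm
    have hinner : ∀ t ∈ T, (∑ A' ∈ 𝒜, ∑ B' ∈ ℬ,
        (if t.1.1 ∈ A' ∧ t.1.2 ∈ B' ∧ (t.2 ∈ A' ∨ t.2 ∈ B') then 1 else 0)) ≤ Q := by
      intro t ht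
      rw [hT, Finset.mem_filter] at ht
      obtain ⟨hbase, hza, hzb, -⟩ := ht
      rw [Finset.mem_product] at hbase
      obtain ⟨hab, hzmem⟩ := hbase
      rw [Finset.mem_product] at hab
      obtain ⟨haA₀, hbB₀⟩ := hab
      rw [Finset.mem_union] at hzmem
      rcases hzmem with hzA | hzB
      · -- z ∈ A₀
        have hle : ∀ A' ∈ 𝒜, ∀ B' ∈ ℬ,
            (if t.1.1 ∈ A' ∧ t.1.2 ∈ B' ∧ (t.2 ∈ A' ∨ t.2 ∈ B') then 1 else 0)
              ≤ (if t.1.1 ∈ A' ∧ t.2 ∈ A' then 1 else 0) *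
                (if t.1.2 ∈ B' then 1 else 0) := by
          intro A' _ B' hB'
          by_cases hcond : t.1.1 ∈ A' ∧ t.1.2 ∈ B' ∧ (t.2 ∈ A' ∨ t.2 ∈ B')
          · obtain ⟨h1, h2, h3⟩ := hcond
            have hB'sub : B' ⊆ B₀ := (Finset.mem_powersetCard.mp hB').1
            have hzA' : t.2 ∈ A' := by
              rcases h3 with h | h
              · exact h
              · exact absurd (hB'sub h) (Finset.disjoint_left.mp hdisj0 hzA)
            rw [if_pos ⟨h1, h2, h3⟩, if_pos ⟨h1, hzA'⟩, if_pos h2]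
          · rw [if_neg hcond]
            exact Nat.zero_le _
        calc (∑ A' ∈ 𝒜, ∑ B' ∈ ℬ,
            (if t.1.1 ∈ A' ∧ t.1.2 ∈ B' ∧ (t.2 ∈ A' ∨ t.2 ∈ B') then 1 else 0))
            ≤ ∑ A' ∈ 𝒜, ∑ B' ∈ ℬ,
              (if t.1.1 ∈ A' ∧ t.2 ∈ A' then 1 else 0) *
                (if t.1.2 ∈ B' then 1 else 0) :=
              Finset.sum_le_sum fun A' hA' => Finset.sum_le_sum fun B' hB' =>
                hle A' hA' B' hB'
          _ = (∑ A' ∈ 𝒜, if t.1.1 ∈ A' ∧ t.2 ∈ A' then 1 else 0) *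
              (∑ B' ∈ ℬ, if t.1.2 ∈ B' then 1 else 0) := by
              rw [Finset.sum_mul_sum]
          _ = (𝒜.filter fun A' => t.1.1 ∈ A' ∧ t.2 ∈ A').card *
              (ℬ.filter fun B' => t.1.2 ∈ B').card := by
              rw [Finset.card_filter, Finset.card_filter]
          _ ≤ Q := by
              rw [hQ]
              have hc2 := count_two A₀ p haA₀ hzA (Ne.symm hza)
              have hc1 := count_one B₀ p hbB₀
              rw [hA₀card] at hc2
              rw [hB₀card] at hc1
              exact Nat.mul_le_mul (by exact_mod_cast hc2) (by exact_mod_cast hc1)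
      · -- z ∈ B₀
        have hle : ∀ A' ∈ 𝒜, ∀ B' ∈ ℬ,
            (if t.1.1 ∈ A' ∧ t.1.2 ∈ B' ∧ (t.2 ∈ A' ∨ t.2 ∈ B') then 1 else 0)
              ≤ (if t.1.1 ∈ A' then 1 else 0) *
                (if t.1.2 ∈ B' ∧ t.2 ∈ B' then 1 else 0) := by
          intro A' hA' B' _
          by_cases hcond : t.1.1 ∈ A' ∧ t.1.2 ∈ B' ∧ (t.2 ∈ A' ∨ t.2 ∈ B')
          · obtain ⟨h1, h2, h3⟩ := hcond
            have hA'sub : A' ⊆ A₀ := (Finset.mem_powersetCard.mp hA').1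
            have hzB' : t.2 ∈ B' := by
              rcases h3 with h | h
              · exact absurd (hA'sub h) (Finset.disjoint_right.mp hdisj0 hzB)
              · exact h
            rw [if_pos ⟨h1, h2, h3⟩, if_pos h1, if_pos ⟨h2, hzB'⟩]
          · rw [if_neg hcond]
            exact Nat.zero_le _
        calc (∑ A' ∈ 𝒜, ∑ B' ∈ ℬ,
            (if t.1.1 ∈ A' ∧ t.1.2 ∈ B' ∧ (t.2 ∈ A' ∨ t.2 ∈ B') then 1 else 0))
            ≤ ∑ A' ∈ 𝒜, ∑ B' ∈ ℬ,
              (if t.1.1 ∈ A' then 1 else 0) *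
                (if t.1.2 ∈ B' ∧ t.2 ∈ B' then 1 else 0) :=
              Finset.sum_le_sum fun A' hA' => Finset.sum_le_sum fun B' hB' =>
                hle A' hA' B' hB'
          _ = (∑ A' ∈ 𝒜, if t.1.1 ∈ A' then 1 else 0) *
              (∑ B' ∈ ℬ, if t.1.2 ∈ B' ∧ t.2 ∈ B' then 1 else 0) := by
              rw [Finset.sum_mul_sum]
          _ = (𝒜.filter fun A' => t.1.1 ∈ A').card *
              (ℬ.filter fun B' => t.1.2 ∈ B' ∧ t.2 ∈ B').card := by
              rw [Finset.card_filter, Finset.card_filter]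
          _ ≤ Q := by
              rw [hQ, mul_comm ((n-2).choose (p-2)) ((n-1).choose (p-1))]
              have hc2 := count_two B₀ p hbB₀ hzB (Ne.symm hzb)
              have hc1 := count_one A₀ p haA₀
              rw [hB₀card] at hc2
              rw [hA₀card] at hc1
              exact Nat.mul_le_mul (by exact_mod_cast hc1) (by exact_mod_cast hc2)
    have upper : ∑ A' ∈ 𝒜, ∑ B' ∈ ℬ, (Bad A' B').card ≤ n * n * (2*d) * Q := by
      calc ∑ A' ∈ 𝒜, ∑ B' ∈ ℬ, (Bad A' B').card
          = ∑ t ∈ T, ∑ A' ∈ 𝒜, ∑ B' ∈ ℬ,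
              (if t.1.1 ∈ A' ∧ t.1.2 ∈ B' ∧ (t.2 ∈ A' ∨ t.2 ∈ B') then 1 else 0) := hswap
        _ ≤ ∑ _t ∈ T, Q := Finset.sum_le_sum hinner
        _ = T.card * Q := by rw [Finset.sum_const, smul_eq_mul]
        _ ≤ n * n * (2*d) * Q := Nat.mul_le_mul_right _ hTcard
    have hAcard : 𝒜.card = n.choose p := by
      rw [h𝒜, Finset.card_powersetCard, hA₀card]
    have hBcard : ℬ.card = n.choose p := by
      rw [hℬ, Finset.card_powersetCard, hB₀card]
    have harith := arith_key d p hd (by omega : 2 ≤ p)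
    rw [← hn] at harith
    rw [← hQ] at harith
    have : n.choose p * n.choose p ≤ n * n * (2*d) * Q := by
      calc n.choose p * n.choose p = 𝒜.card * ℬ.card := by rw [hAcard, hBcard]
        _ ≤ _ := lower
        _ ≤ _ := upper
    omega
  obtain ⟨A', hA'mem, B', hB'mem, hempty⟩ := hkey
  rw [h𝒜, Finset.mem_powersetCard] at hA'mem
  rw [hℬ, Finset.mem_powersetCard] at hB'mem
  obtain ⟨hA'sub, hA'card⟩ := hA'mem
  obtain ⟨hB'sub, hB'card⟩ := hB'mem
  have hA'A : A' ⊆ A := hA'sub.trans hA₀sub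
  have hB'B : B' ⊆ B := hB'sub.trans hB₀sub
  refine hnosub ⟨A', B', hA'A, hB'B, by simp [hA'card, hB'card], ?_⟩
  refine ⟨hsubloc A' B' hA'A hB'B, ?_⟩
  intro a ha b hb
  have haA : a ∈ A := hA'A ha
  have hbB : b ∈ B := hB'B hb
  obtain ⟨hc1, hc2, hc3, hc4⟩ := crit_bounds hP hloc haA hbB
  have hforward : ∀ z : V, z ∈ (A' : Set V) ∪ (B' : Set V) → z ≠ a → z ≠ b →
      ¬ (G.edist (critA ℓ P a b) z ≤ (ℓ : ℕ∞) ∨ G.edist (critB ℓ P a b) z ≤ (ℓ : ℕ∞)) := by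
    intro z hz hza hzb hdist
    have hzAB : z ∈ A' ∨ z ∈ B' := by
      rcases hz with h | h
      · exact Or.inl (by exact_mod_cast h)
      · exact Or.inr (by exact_mod_cast h)
    have htmem : ((a, b), z) ∈ Bad A' B' := by
      rw [hBad]
      simp only [Finset.mem_filter]
      refine ⟨?_, ha, hb, hzAB⟩
      rw [hT]
      simp only [Finset.mem_filter, Finset.mem_product, Finset.mem_union]
      refine ⟨⟨⟨hA'sub ha, hB'sub hb⟩, ?_⟩, hza, hzb, hdist⟩
      rcases hzAB with h | h
      · exact Or.inl (hA'sub h)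
      · exact Or.inr (hB'sub h)
    rw [hempty] at htmem
    exact absurd htmem (Finset.notMem_empty _)
  constructor
  · apply Set.eq_of_subset_of_subset
    · rintro z ⟨hz1, hz2⟩
      by_contra hzz
      simp only [Set.mem_insert_iff, Set.mem_singleton_iff, not_or] at hzz
      exact hforward z hz2 hzz.1 hzz.2 (Or.inl hz1)
    · rintro z hz
      rcases hz with rfl | hz
      · exact ⟨hc1, Set.mem_union_left _ (by exact_mod_cast ha)⟩
      · rw [Set.mem_singleton_iff] at hz; subst hz
        exact ⟨hc2, Set.mem_union_right _ (by exact_mod_cast hb)⟩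
  · apply Set.eq_of_subset_of_subset
    · rintro z ⟨hz1, hz2⟩
      by_contra hzz
      simp only [Set.mem_insert_iff, Set.mem_singleton_iff, not_or] at hzz
      exact hforward z hz2 hzz.1 hzz.2 (Or.inr hz1)
    · rintro z hz
      rcases hz with rfl | hz
      · exact ⟨hc3, Set.mem_union_left _ (by exact_mod_cast ha)⟩
      · rw [Set.mem_singleton_iff] at hz; subst hz
        exact ⟨hc4, Set.mem_union_right _ (by exact_mod_cast hb)⟩
end

section
/- Let A, B be an independent pair in a graph G, and restrict G to the union of the vertices of the paths P_{ab} over (a,b) ∈ A×B. Then: (a) if u is a vertex of P_{ab} and u' is a vertex of P_{a'b'} with a ≠ a' and b ≠ b', then d(u,u') ≥ 4; (b) for all distinct a, a' ∈ A, the distance between RS(a) and RS(a') is at least 4, and for all distinct b, b' ∈ B, the distance between RS(b) and RS(b') is at least 4. -/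
open SimpleGraph

variable {V : Type*}

section helpers

private lemma edist_getVert_le' {G : SimpleGraph V} {a b : V} (w : G.Walk a b) (i j : ℕ)
    (hij : i ≤ j) : G.edist (w.getVert i) (w.getVert j) ≤ ((j - i : ℕ) : ℕ∞) := by
  induction j with
  | zero => obtain rfl : i = 0 := Nat.le_zero.mp hij; simp
  | succ n ih =>
    rcases Nat.eq_or_lt_of_le hij with rfl | h
    · simp
    have h1 : i ≤ n := by omega
    rcases Nat.lt_or_ge n w.length with hn | hn
    · calc G.edist (w.getVert i) (w.getVert (n+1))
          ≤ G.edist (w.getVert i) (w.getVert n) + G.edist (w.getVert n) (w.getVert (n+1)) :=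
            SimpleGraph.edist_triangle
        _ ≤ ((n - i : ℕ) : ℕ∞) + 1 :=
            add_le_add (ih h1) (by simpa using SimpleGraph.edist_le (w.adj_getVert_succ hn).toWalk)
        _ = ((n + 1 - i : ℕ) : ℕ∞) := by
            rw [← Nat.cast_one, ← Nat.cast_add]; congr 1; omega
    · have e1 : w.getVert (n+1) = w.getVert n := by
        rw [w.getVert_of_length_le hn, w.getVert_of_length_le (by omega)]
      rw [e1]
      exact (ih h1).trans (Nat.cast_le.mpr (by omega))

private lemma support_getElem? {G : SimpleGraph V} {a b : V} (w : G.Walk a b) :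
    ∀ i ≤ w.length, w.support[i]? = some (w.getVert i) := by
  induction w with
  | nil => intro i hi; obtain rfl : i = 0 := Nat.le_zero.mp hi; simp
  | cons h p ih =>
    intro i hi
    cases i with
    | zero => simp
    | succ n => simpa using ih n (by simpa using hi)

variable [LinearOrder (Sym2 V)] {G : SimpleGraph V} {ℓ d : ℕ} {A B : Finset V}
  {P : V → V → List V}

/-- All the structural facts we need about one minimum path of the family. -/
private lemma pathFacts (hP : IsMinPathFamily G A B P) (hind : IndependentPair G ℓ d A B P)
    {a b : V} (ha : a ∈ A) (hb : b ∈ B) :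
    ∃ w : G.Walk a b, w.support = P a b ∧ 8 ≤ ℓ ∧ ℓ + 1 ≤ w.length ∧ w.length + 7 ≤ 2 * ℓ ∧
      critA ℓ P a b = w.getVert (ℓ - 3) ∧ critB ℓ P a b = w.getVert (w.length - (ℓ - 3)) := by
  obtain ⟨w, ⟨hpath, hmin, -⟩, hsupp⟩ := hP a ha b hb
  have hedist : G.edist a b = (w.length : ℕ∞) := by
    refine le_antisymm (SimpleGraph.edist_le w) (le_iInf fun q => Nat.cast_le.mpr (hmin q))
  obtain ⟨hdisj, hfar, hclose⟩ := hind.1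
  have hab : a ≠ b := fun h => Finset.disjoint_left.mp hdisj ha (h ▸ hb)
  have h1 : (ℓ : ℕ∞) + 1 ≤ (w.length : ℕ∞) := by
    rw [← hedist]
    exact hfar a (Or.inl (by simpa)) b (Or.inr (by simpa)) hab
  have h1' : ℓ + 1 ≤ w.length := by exact_mod_cast (by push_cast at h1 ⊢; exact h1 : ((ℓ+1 : ℕ) : ℕ∞) ≤ (w.length : ℕ∞))
  have h2 : (w.length : ℕ∞) + 2 ^ (d + 2) + 3 ≤ 2 * (ℓ : ℕ∞) := by
    rw [← hedist]; exact hclose a ha b hb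
  have h2' : w.length + 2 ^ (d + 2) + 3 ≤ 2 * ℓ := by
    exact_mod_cast (by push_cast at h2 ⊢; exact h2 :
      ((w.length + 2 ^ (d + 2) + 3 : ℕ) : ℕ∞) ≤ ((2 * ℓ : ℕ) : ℕ∞))
  have hpow : 4 ≤ 2 ^ (d + 2) := by
    calc (4 : ℕ) = 2 ^ 2 := by norm_num
      _ ≤ 2 ^ (d + 2) := Nat.pow_le_pow_right (by norm_num) (by omega)
  have h2'' : w.length + 7 ≤ 2 * ℓ := by omega
  have hl8 : 8 ≤ ℓ := by omega
  refine ⟨w, hsupp, hl8, h1', h2'', ?_, ?_⟩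
  · rw [critA, ← hsupp, List.getD_eq_getElem?_getD,
      support_getElem? w (ℓ - 3) (by omega), Option.getD_some]
  · rw [critB, ← hsupp, List.getD_eq_getElem?_getD, w.length_support]
    have : w.length + 1 - (ℓ - 2) = w.length - (ℓ - 3) := by omega
    rw [this, support_getElem? w _ (by omega), Option.getD_some]

private lemma ball_mem {c t x y : V} (hball : gball G c ℓ ∩ ((A : Set V) ∪ (B : Set V)) = {x, y})
    (ht : t ∈ (A : Set V) ∪ (B : Set V)) (h : G.edist c t ≤ (ℓ : ℕ∞)) : t = x ∨ t = y := by
  have : t ∈ ({x, y} : Set V) := hball ▸ ⟨h, ht⟩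
  simpa using this

end helpers
section core
variable [LinearOrder (Sym2 V)] {G : SimpleGraph V} {ℓ d : ℕ} {A B : Finset V}
  {P : V → V → List V}

set_option linter.unusedSectionVars false

private lemma edist_getVert_le {G : SimpleGraph V} {a b : V} (w : G.Walk a b) (i j n : ℕ)
    (h : i - j ≤ n ∧ j - i ≤ n) : G.edist (w.getVert i) (w.getVert j) ≤ (n : ℕ∞) := by
  rcases le_total i j with hij | hij
  · exact (edist_getVert_le' w i j hij).trans (Nat.cast_le.mpr (by omega))
  · rw [SimpleGraph.edist_comm]
    exact (edist_getVert_le' w j i hij).trans (Nat.cast_le.mpr (by omega))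

private lemma not_four_le {e : ℕ∞} (h : ¬ (4 : ℕ∞) ≤ e) : e ≤ 3 := by
  have h4 : ((4 : ℕ∞)) = 3 + 1 := by norm_num
  exact (ENat.lt_add_one_iff (by norm_num)).mp (h4 ▸ not_le.mp h)

private lemma cast_add3_le {x y n : ℕ} (h : x + 3 + y ≤ n) :
    (x : ℕ∞) + 3 + (y : ℕ∞) ≤ (n : ℕ∞) := by
  calc (x : ℕ∞) + 3 + (y : ℕ∞) = ((x + 3 + y : ℕ) : ℕ∞) := by push_cast; ring
    _ ≤ _ := Nat.cast_le.mpr h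

private lemma triangle2 {G : SimpleGraph V} (c u u' t : V) :
    G.edist c t ≤ G.edist c u + G.edist u u' + G.edist u' t :=
  le_trans SimpleGraph.edist_triangle (add_le_add SimpleGraph.edist_triangle le_rfl)

private lemma getVert_of_getElem? {a b u : V} {w : G.Walk a b} {l : List V} (hsupp : w.support = l)
    {i : ℕ} (hu : l[i]? = some u) : u = w.getVert i ∧ i ≤ w.length := by
  have hlen : i < l.length := (List.getElem?_eq_some_iff.mp hu).1
  rw [← hsupp, w.length_support] at hlen
  have := support_getElem? w i (by omega)
  rw [hsupp, hu] at this
  exact ⟨(Option.some_injective _ this), by omega⟩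

/-- distance from the `j`-th vertex to the start of the walk. -/
private lemma edist_to_start {G : SimpleGraph V} {a b : V} (w : G.Walk a b) (j : ℕ) :
    G.edist (w.getVert j) a ≤ (j : ℕ∞) := by
  have := edist_getVert_le w j 0 j (by omega)
  rwa [w.getVert_zero] at this

/-- distance from the `j`-th vertex to the end of the walk. -/
private lemma edist_to_end {G : SimpleGraph V} {a b : V} (w : G.Walk a b) (j : ℕ)
    (hj : j ≤ w.length) : G.edist (w.getVert j) b ≤ ((w.length - j : ℕ) : ℕ∞) := by
  have := edist_getVert_le w j w.length (w.length - j) (by omega)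
  rwa [w.getVert_length] at this

/-- Core lemma, A-side vs A-side. -/
private lemma coreA (hP : IsMinPathFamily G A B P) (hind : IndependentPair G ℓ d A B P)
    {a b a' b' u u' : V} (ha : a ∈ A) (hb : b ∈ B) (ha' : a' ∈ A) (hb' : b' ∈ B)
    (hne : a ≠ a') {i j : ℕ} (hi : i ≤ ℓ - 3) (hj : j ≤ ℓ - 3)
    (hu : (P a b)[i]? = some u) (hu' : (P a' b')[j]? = some u') :
    (4 : ℕ∞) ≤ G.edist u u' := by
  by_contra hcon
  have h3 : G.edist u u' ≤ 3 := not_four_le hcon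
  have h3' : G.edist u' u ≤ 3 := by rwa [SimpleGraph.edist_comm] at h3
  obtain ⟨w, hsupp, hl8, hlen1, hlen2, hcA, -⟩ := pathFacts hP hind ha hb
  obtain ⟨w', hsupp', -, hlen1', hlen2', hcA', -⟩ := pathFacts hP hind ha' hb'
  obtain ⟨rfl, hiw⟩ := getVert_of_getElem? hsupp hu
  obtain ⟨rfl, hjw⟩ := getVert_of_getElem? hsupp' hu'
  have hdisj := hind.1.1
  rcases le_total j i with hji | hij
  · have hda : G.edist (critA ℓ P a b) a' ≤ (ℓ : ℕ∞) := by
      calc G.edist (critA ℓ P a b) a'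
          ≤ G.edist (critA ℓ P a b) (w.getVert i) + G.edist (w.getVert i) (w'.getVert j)
              + G.edist (w'.getVert j) a' := triangle2 _ _ _ _
        _ ≤ ((ℓ - 3 - i : ℕ) : ℕ∞) + 3 + ((j : ℕ) : ℕ∞) := by
            refine add_le_add (add_le_add ?_ h3) (edist_to_start w' j)
            rw [hcA]; exact edist_getVert_le w (ℓ - 3) i _ (by omega)
        _ ≤ (ℓ : ℕ∞) := cast_add3_le (by omega)
    rcases ball_mem (hind.2 a ha b hb).1 (Or.inl (by simpa)) hda with h | h
    · exact hne h.symm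
    · exact Finset.disjoint_left.mp hdisj ha' (h ▸ hb)
  · have hda : G.edist (critA ℓ P a' b') a ≤ (ℓ : ℕ∞) := by
      calc G.edist (critA ℓ P a' b') a
          ≤ G.edist (critA ℓ P a' b') (w'.getVert j) + G.edist (w'.getVert j) (w.getVert i)
              + G.edist (w.getVert i) a := triangle2 _ _ _ _
        _ ≤ ((ℓ - 3 - j : ℕ) : ℕ∞) + 3 + ((i : ℕ) : ℕ∞) := by
            refine add_le_add (add_le_add ?_ h3') (edist_to_start w i)
            rw [hcA']; exact edist_getVert_le w' (ℓ - 3) j _ (by omega)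
        _ ≤ (ℓ : ℕ∞) := cast_add3_le (by omega)
    rcases ball_mem (hind.2 a' ha' b' hb').1 (Or.inl (by simpa)) hda with h | h
    · exact hne h
    · exact Finset.disjoint_left.mp hdisj ha (h ▸ hb')

/-- Core lemma, B-side vs B-side. -/
private lemma coreB (hP : IsMinPathFamily G A B P) (hind : IndependentPair G ℓ d A B P)
    {a b a' b' u u' : V} (ha : a ∈ A) (hb : b ∈ B) (ha' : a' ∈ A) (hb' : b' ∈ B)
    (hne : b ≠ b') {i j : ℕ}
    (hi : (P a b).length ≤ i + (ℓ - 2)) (hj : (P a' b').length ≤ j + (ℓ - 2))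
    (hu : (P a b)[i]? = some u) (hu' : (P a' b')[j]? = some u') :
    (4 : ℕ∞) ≤ G.edist u u' := by
  by_contra hcon
  have h3 : G.edist u u' ≤ 3 := not_four_le hcon
  have h3' : G.edist u' u ≤ 3 := by rwa [SimpleGraph.edist_comm] at h3
  obtain ⟨w, hsupp, hl8, hlen1, hlen2, -, hcB⟩ := pathFacts hP hind ha hb
  obtain ⟨w', hsupp', -, hlen1', hlen2', -, hcB'⟩ := pathFacts hP hind ha' hb'
  rw [← hsupp, w.length_support] at hi
  rw [← hsupp', w'.length_support] at hj
  obtain ⟨rfl, hiw⟩ := getVert_of_getElem? hsupp hu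
  obtain ⟨rfl, hjw⟩ := getVert_of_getElem? hsupp' hu'
  have hdisj := hind.1.1
  rcases le_total (w'.length - j) (w.length - i) with hji | hij
  · have hda : G.edist (critB ℓ P a b) b' ≤ (ℓ : ℕ∞) := by
      calc G.edist (critB ℓ P a b) b'
          ≤ G.edist (critB ℓ P a b) (w.getVert i) + G.edist (w.getVert i) (w'.getVert j)
              + G.edist (w'.getVert j) b' := triangle2 _ _ _ _
        _ ≤ ((ℓ - 3 - (w.length - i) : ℕ) : ℕ∞) + 3 + ((w'.length - j : ℕ) : ℕ∞) := by
            refine add_le_add (add_le_add ?_ h3) (edist_to_end w' j hjw)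
            rw [hcB]; exact edist_getVert_le w (w.length - (ℓ - 3)) i _ (by omega)
        _ ≤ (ℓ : ℕ∞) := cast_add3_le (by omega)
    rcases ball_mem (hind.2 a ha b hb).2 (Or.inr (by simpa)) hda with h | h
    · exact Finset.disjoint_left.mp hdisj (h ▸ ha) hb'
    · exact hne h.symm
  · have hda : G.edist (critB ℓ P a' b') b ≤ (ℓ : ℕ∞) := by
      calc G.edist (critB ℓ P a' b') b
          ≤ G.edist (critB ℓ P a' b') (w'.getVert j) + G.edist (w'.getVert j) (w.getVert i)
              + G.edist (w.getVert i) b := triangle2 _ _ _ _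
        _ ≤ ((ℓ - 3 - (w'.length - j) : ℕ) : ℕ∞) + 3 + ((w.length - i : ℕ) : ℕ∞) := by
            refine add_le_add (add_le_add ?_ h3') (edist_to_end w i hiw)
            rw [hcB']; exact edist_getVert_le w' (w'.length - (ℓ - 3)) j _ (by omega)
        _ ≤ (ℓ : ℕ∞) := cast_add3_le (by omega)
    rcases ball_mem (hind.2 a' ha' b' hb').2 (Or.inr (by simpa)) hda with h | h
    · exact Finset.disjoint_left.mp hdisj (h ▸ ha') hb
    · exact hne h

/-- Core lemma, A-side vs B-side. -/
private lemma coreAB (hP : IsMinPathFamily G A B P) (hind : IndependentPair G ℓ d A B P)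
    {a b a' b' u u' : V} (ha : a ∈ A) (hb : b ∈ B) (ha' : a' ∈ A) (hb' : b' ∈ B)
    (hnea : a ≠ a') (hneb : b ≠ b') {i j : ℕ}
    (hi : i ≤ ℓ - 3) (hj : (P a' b').length ≤ j + (ℓ - 2))
    (hu : (P a b)[i]? = some u) (hu' : (P a' b')[j]? = some u') :
    (4 : ℕ∞) ≤ G.edist u u' := by
  by_contra hcon
  have h3 : G.edist u u' ≤ 3 := not_four_le hcon
  have h3' : G.edist u' u ≤ 3 := by rwa [SimpleGraph.edist_comm] at h3
  obtain ⟨w, hsupp, hl8, hlen1, hlen2, hcA, -⟩ := pathFacts hP hind ha hb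
  obtain ⟨w', hsupp', -, hlen1', hlen2', -, hcB'⟩ := pathFacts hP hind ha' hb'
  rw [← hsupp', w'.length_support] at hj
  obtain ⟨rfl, hiw⟩ := getVert_of_getElem? hsupp hu
  obtain ⟨rfl, hjw⟩ := getVert_of_getElem? hsupp' hu'
  have hdisj := hind.1.1
  rcases le_total (w'.length - j) i with hji | hij
  · have hda : G.edist (critA ℓ P a b) b' ≤ (ℓ : ℕ∞) := by
      calc G.edist (critA ℓ P a b) b'
          ≤ G.edist (critA ℓ P a b) (w.getVert i) + G.edist (w.getVert i) (w'.getVert j)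
              + G.edist (w'.getVert j) b' := triangle2 _ _ _ _
        _ ≤ ((ℓ - 3 - i : ℕ) : ℕ∞) + 3 + ((w'.length - j : ℕ) : ℕ∞) := by
            refine add_le_add (add_le_add ?_ h3) (edist_to_end w' j hjw)
            rw [hcA]; exact edist_getVert_le w (ℓ - 3) i _ (by omega)
        _ ≤ (ℓ : ℕ∞) := cast_add3_le (by omega)
    rcases ball_mem (hind.2 a ha b hb).1 (Or.inr (by simpa)) hda with h | h
    · exact Finset.disjoint_left.mp hdisj (h ▸ ha) hb'
    · exact hneb h.symm
  · have hda : G.edist (critB ℓ P a' b') a ≤ (ℓ : ℕ∞) := by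
      calc G.edist (critB ℓ P a' b') a
          ≤ G.edist (critB ℓ P a' b') (w'.getVert j) + G.edist (w'.getVert j) (w.getVert i)
              + G.edist (w.getVert i) a := triangle2 _ _ _ _
        _ ≤ ((ℓ - 3 - (w'.length - j) : ℕ) : ℕ∞) + 3 + ((i : ℕ) : ℕ∞) := by
            refine add_le_add (add_le_add ?_ h3') (edist_to_start w i)
            rw [hcB']; exact edist_getVert_le w' (w'.length - (ℓ - 3)) j _ (by omega)
        _ ≤ (ℓ : ℕ∞) := cast_add3_le (by omega)
    rcases ball_mem (hind.2 a' ha' b' hb').2 (Or.inl (by simpa)) hda with h | h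
    · exact hnea h
    · exact Finset.disjoint_left.mp hdisj ha (h ▸ hb')

end core

/-- Lemma `nonintche`: in an independent pair `A, B`, with the graph restricted
to the vertices of the `AB`-paths: (a) vertices of `AB`-paths with disjoint endpoints are at
distance at least 4; (b) distinct root sections of `A` (resp. of `B`) are at distance at
least 4. -/
theorem stmt14 (d ℓ : ℕ) {V : Type*} [LinearOrder (Sym2 V)]
    (G : SimpleGraph V) (A B : Finset V) (P : V → V → List V)
    (hP : IsMinPathFamily G A B P)
    (hind : IndependentPair G ℓ d A B P)
    (hrestr : ∀ v : V, ∃ a ∈ A, ∃ b ∈ B, v ∈ P a b) :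
    (∀ a ∈ A, ∀ b ∈ B, ∀ a' ∈ A, ∀ b' ∈ B, a ≠ a' → b ≠ b' →
      ∀ u ∈ P a b, ∀ u' ∈ P a' b', (4 : ℕ∞) ≤ G.edist u u') ∧
    (∀ a ∈ A, ∀ a' ∈ A, a ≠ a' →
      ∀ u ∈ RSA ℓ B P a, ∀ u' ∈ RSA ℓ B P a', (4 : ℕ∞) ≤ G.edist u u') ∧
    (∀ b ∈ B, ∀ b' ∈ B, b ≠ b' →
      ∀ u ∈ RSB ℓ A P b, ∀ u' ∈ RSB ℓ A P b', (4 : ℕ∞) ≤ G.edist u u') := by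
  refine ⟨?_, ?_, ?_⟩
  · -- part (a)
    intro a ha b hb a' ha' b' hb' hnea hneb u hu u' hu'
    obtain ⟨i, hilt, hieq⟩ := List.mem_iff_getElem.mp hu
    obtain ⟨j, hjlt, hjeq⟩ := List.mem_iff_getElem.mp hu'
    have hu2 : (P a b)[i]? = some u := by rw [← hieq]; exact List.getElem?_eq_getElem _
    have hu2' : (P a' b')[j]? = some u' := by rw [← hjeq]; exact List.getElem?_eq_getElem _
    obtain ⟨w, hsupp, hl8, hlen1, hlen2, -, -⟩ := pathFacts hP hind ha hb
    obtain ⟨w', hsupp', -, hlen1', hlen2', -, -⟩ := pathFacts hP hind ha' hb'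
    have hside : i ≤ ℓ - 3 ∨ (P a b).length ≤ i + (ℓ - 2) := by
      rw [← hsupp, w.length_support] at hilt ⊢; omega
    have hside' : j ≤ ℓ - 3 ∨ (P a' b').length ≤ j + (ℓ - 2) := by
      rw [← hsupp', w'.length_support] at hjlt ⊢; omega
    rcases hside with hi | hi <;> rcases hside' with hj | hj
    · exact coreA hP hind ha hb ha' hb' hnea hi hj hu2 hu2'
    · exact coreAB hP hind ha hb ha' hb' hnea hneb hi hj hu2 hu2'
    · have := coreAB hP hind ha' hb' ha hb hnea.symm hneb.symm hj hi hu2' hu2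
      rwa [SimpleGraph.edist_comm] at this
    · exact coreB hP hind ha hb ha' hb' hneb hi hj hu2 hu2'
  · -- part (b), A-side
    intro a ha a' ha' hne u hu u' hu'
    obtain ⟨b, hb, hmem⟩ := hu
    obtain ⟨b', hb', hmem'⟩ := hu'
    obtain ⟨i, hilt, hieq⟩ := List.mem_iff_getElem.mp hmem
    obtain ⟨j, hjlt, hjeq⟩ := List.mem_iff_getElem.mp hmem'
    have h2 := List.getElem_take (h := hilt)
    have h2' := List.getElem_take (h := hjlt)
    rw [hieq] at h2
    rw [hjeq] at h2'
    have hu2 : (P a b)[i]? = some u := by rw [h2]; exact List.getElem?_eq_getElem _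
    have hu2' : (P a' b')[j]? = some u' := by rw [h2']; exact List.getElem?_eq_getElem _
    have hi : i ≤ ℓ - 3 := by simp [List.length_take] at hilt; omega
    have hj : j ≤ ℓ - 3 := by simp [List.length_take] at hjlt; omega
    exact coreA hP hind ha hb ha' hb' hne hi hj hu2 hu2'
  · -- part (b), B-side
    intro b hb b' hb' hne u hu u' hu'
    obtain ⟨a, ha, hmem⟩ := hu
    obtain ⟨a', ha', hmem'⟩ := hu'
    obtain ⟨k, hklt, hkeq⟩ := List.mem_iff_getElem.mp hmem
    obtain ⟨m, hmlt, hmeq⟩ := List.mem_iff_getElem.mp hmem'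
    have h2 := List.getElem_drop (h := hklt)
    have h2' := List.getElem_drop (h := hmlt)
    rw [hkeq] at h2
    rw [hmeq] at h2'
    have hu2 : (P a b)[(P a b).length - (ℓ - 2) + k]? = some u := by
      rw [h2]; exact List.getElem?_eq_getElem _
    have hu2' : (P a' b')[(P a' b').length - (ℓ - 2) + m]? = some u' := by
      rw [h2']; exact List.getElem?_eq_getElem _
    have hi : (P a b).length ≤ ((P a b).length - (ℓ - 2) + k) + (ℓ - 2) := by omega
    have hj : (P a' b').length ≤ ((P a' b').length - (ℓ - 2) + m) + (ℓ - 2) := by omega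
    exact coreB hP hind ha hb ha' hb' hne hi hj hu2 hu2'
end

section
/- Let A, B be an independent pair in a graph G, restricted to the vertices of the AB-paths. For every b ∈ B, the escape graph of b contains no directed cycle. -/
open SimpleGraph

variable {V : Type*}

lemma walk_support_getElem {G : SimpleGraph V} {x y : V} (p : G.Walk x y) (i : ℕ)
    (h : i < p.support.length) : p.support[i] = p.getVert i := by
  induction p generalizing i with
  | nil =>
    simp only [SimpleGraph.Walk.support_nil, List.length_singleton] at h
    interval_cases i
    simp [SimpleGraph.Walk.getVert]
  | cons hadj q ih =>
    cases i with
    | zero => simp [SimpleGraph.Walk.getVert]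
    | succ k =>
      simp only [SimpleGraph.Walk.support_cons, List.length_cons] at h
      simpa [SimpleGraph.Walk.getVert_cons_succ] using ih k (by omega)

lemma edist_getVert_le_sub {G : SimpleGraph V} {x y : V} (p : G.Walk x y) {m n : ℕ}
    (h : m ≤ n) : G.edist (p.getVert m) (p.getVert n) ≤ ((n - m : ℕ) : ℕ∞) := by
  induction n, h using Nat.le_induction with
  | base => simp [SimpleGraph.edist_self]
  | succ n hmn ih =>
    have step : G.edist (p.getVert n) (p.getVert (n + 1)) ≤ 1 := by
      by_cases hn : n < p.length
      · exact (edist_eq_one_iff_adj.mpr (p.adj_getVert_succ hn)).le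
      · rw [p.getVert_of_length_le (le_of_not_gt hn), p.getVert_of_length_le (by omega)]
        simp [SimpleGraph.edist_self]
    calc G.edist (p.getVert m) (p.getVert (n + 1))
        ≤ G.edist (p.getVert m) (p.getVert n) + G.edist (p.getVert n) (p.getVert (n + 1)) :=
          G.edist_triangle
      _ ≤ ((n - m : ℕ) : ℕ∞) + 1 := add_le_add ih step
      _ = ((n + 1 - m : ℕ) : ℕ∞) := by
          rw [show n + 1 - m = (n - m) + 1 from by omega]; push_cast; ring

lemma length_le_edist {G : SimpleGraph V} {x y : V} (p : G.Walk x y)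
    (hmin : ∀ q : G.Walk x y, p.length ≤ q.length) : (p.length : ℕ∞) ≤ G.edist x y := by
  rw [edist_eq_sInf]
  refine le_sInf ?_
  rintro z ⟨q, rfl⟩
  simpa using (Nat.cast_le (α := ℕ∞)).mpr (hmin q)

lemma arc_step {V : Type*} [LinearOrder (Sym2 V)] (G : SimpleGraph V) (ℓ d : ℕ)
    (A B : Finset V) (P : V → V → List V)
    (hP : IsMinPathFamily G A B P) (hind : IndependentPair G ℓ d A B P)
    {a a' b : V} (hb : b ∈ B)
    (harc : EscapeArc G ℓ A B P b a a') :
    G.edist a b + 2 ≤ G.edist a' b := by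
  obtain ⟨ha, ha', u, v, ⟨hadj, huRS, -, -⟩, hne, hv⟩ := harc
  obtain ⟨⟨hdisj, hsep, hloc⟩, hballs⟩ := hind
  obtain ⟨b', hb', humem⟩ := huRS
  -- distinctness and memberships
  have hAB : ∀ x ∈ A, ∀ y ∈ B, x ≠ y := fun x hx y hy hxy =>
    (Finset.disjoint_left.mp hdisj hx) (hxy ▸ hy)
  have haU : a ∈ (A : Set V) ∪ (B : Set V) := Or.inl (Finset.mem_coe.mpr ha)
  have ha'U : a' ∈ (A : Set V) ∪ (B : Set V) := Or.inl (Finset.mem_coe.mpr ha')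
  have hbU : b ∈ (A : Set V) ∪ (B : Set V) := Or.inr (Finset.mem_coe.mpr hb)
  have hb'U : b' ∈ (A : Set V) ∪ (B : Set V) := Or.inr (Finset.mem_coe.mpr hb')
  -- ℓ ≥ 8
  have hℓ8 : 8 ≤ ℓ := by
    have h1 : (ℓ : ℕ∞) + 1 ≤ G.edist a b := hsep a haU b hbU (hAB a ha b hb)
    have h2 := hloc a ha b hb
    have h3 : ((ℓ : ℕ∞) + 1) + 2 ^ (d + 2) + 3 ≤ 2 * (ℓ : ℕ∞) := by
      refine le_trans ?_ h2
      gcongr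
    have h4 : ℓ + 1 + 2 ^ (d + 2) + 3 ≤ 2 * ℓ := by exact_mod_cast h3
    have h5 : (2 : ℕ) ^ 2 ≤ 2 ^ (d + 2) := Nat.pow_le_pow_right (by norm_num) (by omega)
    norm_num at h5
    omega
  -- walks
  obtain ⟨w₁, ⟨hw₁path, hw₁min, -⟩, hw₁sup⟩ := hP a ha b' hb'
  obtain ⟨w₂, ⟨hw₂path, hw₂min, -⟩, hw₂sup⟩ := hP a' ha' b hb
  have hL₁ : ℓ + 1 ≤ w₁.length := by
    have h1 : (ℓ : ℕ∞) + 1 ≤ G.edist a b' := hsep a haU b' hb'U (hAB a ha b' hb')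
    have h2 : G.edist a b' ≤ (w₁.length : ℕ∞) := edist_le w₁
    exact_mod_cast h1.trans h2
  have hL₂ : ℓ + 1 ≤ w₂.length := by
    have h1 : (ℓ : ℕ∞) + 1 ≤ G.edist a' b := hsep a' ha'U b hbU (hAB a' ha' b hb)
    have h2 : G.edist a' b ≤ (w₂.length : ℕ∞) := edist_le w₂
    exact_mod_cast h1.trans h2
  -- index of u on P a b'
  rw [← hw₁sup] at humem
  obtain ⟨i₀, hi₀lt, hu⟩ := List.mem_take_iff_getElem.mp humem
  have hi₀lt' := lt_min_iff.mp hi₀lt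
  have hi₀ : i₀ ≤ ℓ - 3 := by omega
  have hu' : u = w₁.getVert i₀ := by
    rw [← hu]; exact walk_support_getElem w₁ i₀ hi₀lt'.2
  -- index of v on P a' b
  rw [← hw₂sup] at hv
  obtain ⟨j, hvj, hjle⟩ := Walk.mem_support_iff_exists_getVert.mp hv
  -- critical vertices
  have hc₀ : critA ℓ P a b' = w₁.getVert (ℓ - 3) := by
    have hlt : ℓ - 3 < w₁.support.length := by rw [Walk.length_support]; omega
    rw [critA, ← hw₁sup, List.getD_eq_getElem _ _ hlt, walk_support_getElem]
  have hc' : critA ℓ P a' b = w₂.getVert (ℓ - 3) := by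
    have hlt : ℓ - 3 < w₂.support.length := by rw [Walk.length_support]; omega
    rw [critA, ← hw₂sup, List.getD_eq_getElem _ _ hlt, walk_support_getElem]
  -- ball exclusions
  have hexA' : (ℓ : ℕ∞) + 1 ≤ G.edist (w₁.getVert (ℓ - 3)) a' := by
    rw [← hc₀]
    refine (ENat.add_one_le_iff (by simp)).mpr (lt_of_not_ge fun hcon => ?_)
    have hmem : a' ∈ gball G (critA ℓ P a b') ℓ ∩ ((A : Set V) ∪ (B : Set V)) := ⟨hcon, ha'U⟩
    rw [(hballs a ha b' hb').1] at hmem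
    rcases hmem with h | h
    · exact hne h
    · exact hAB a' ha' b' hb' h
  have hexA : (ℓ : ℕ∞) + 1 ≤ G.edist (w₂.getVert (ℓ - 3)) a := by
    rw [← hc']
    refine (ENat.add_one_le_iff (by simp)).mpr (lt_of_not_ge fun hcon => ?_)
    have hmem : a ∈ gball G (critA ℓ P a' b) ℓ ∩ ((A : Set V) ∪ (B : Set V)) := ⟨hcon, haU⟩
    rw [(hballs a' ha' b hb).1] at hmem
    rcases hmem with h | h
    · exact hne h.symm
    · exact hAB a ha b hb h
  -- elementary distance bounds
  have d1 : G.edist a u ≤ (i₀ : ℕ∞) := by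
    have := edist_getVert_le_sub w₁ (Nat.zero_le i₀)
    rw [Walk.getVert_zero, ← hu'] at this
    simpa using this
  have d2 : G.edist u (w₁.getVert (ℓ - 3)) ≤ ((ℓ - 3 - i₀ : ℕ) : ℕ∞) := by
    have := edist_getVert_le_sub w₁ hi₀
    rwa [← hu'] at this
  have d3 : G.edist a' v ≤ (j : ℕ∞) := by
    have := edist_getVert_le_sub w₂ (Nat.zero_le j)
    rw [Walk.getVert_zero, hvj] at this
    simpa using this
  have d4 : G.edist v b ≤ ((w₂.length - j : ℕ) : ℕ∞) := by
    have := edist_getVert_le_sub w₂ hjle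
    rwa [hvj, Walk.getVert_length] at this
  have d5 : G.edist u v ≤ 1 := (edist_eq_one_iff_adj.mpr hadj).le
  -- Claim A : i₀ + 3 ≤ d(a', v)
  have hA : ((i₀ + 3 : ℕ) : ℕ∞) ≤ G.edist a' v := by
    by_contra hcon
    push_neg at hcon
    have hle : G.edist a' v ≤ ((i₀ + 2 : ℕ) : ℕ∞) := by
      rw [show ((i₀ + 3 : ℕ) : ℕ∞) = ((i₀ + 2 : ℕ) : ℕ∞) + 1 by push_cast; ring] at hcon
      exact (ENat.lt_add_one_iff (ENat.coe_ne_top _)).mp hcon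
    have hfin : ((ℓ + 1 : ℕ) : ℕ∞) ≤ ((ℓ : ℕ) : ℕ∞) := by
      calc ((ℓ + 1 : ℕ) : ℕ∞) = (ℓ : ℕ∞) + 1 := by push_cast; ring
        _ ≤ G.edist (w₁.getVert (ℓ - 3)) a' := hexA'
        _ ≤ G.edist (w₁.getVert (ℓ - 3)) u + G.edist u a' := G.edist_triangle
        _ ≤ G.edist (w₁.getVert (ℓ - 3)) u + (G.edist u v + G.edist v a') :=
            add_le_add_right G.edist_triangle _
        _ ≤ ((ℓ - 3 - i₀ : ℕ) : ℕ∞) + (1 + ((i₀ + 2 : ℕ) : ℕ∞)) := by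
            have e2 : G.edist (w₁.getVert (ℓ - 3)) u ≤ ((ℓ - 3 - i₀ : ℕ) : ℕ∞) :=
              (edist_comm (G := G) .. ▸ d2)
            have e3 : G.edist v a' ≤ ((i₀ + 2 : ℕ) : ℕ∞) := (edist_comm (G := G) .. ▸ hle)
            gcongr
        _ = ((ℓ - 3 - i₀ + 1 + (i₀ + 2) : ℕ) : ℕ∞) := by push_cast; ring
        _ = ((ℓ : ℕ) : ℕ∞) := by congr 1; omega
    have : ℓ + 1 ≤ ℓ := by exact_mod_cast hfin
    omega
  -- Claim B : ℓ ≤ j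
  have hB : ℓ ≤ j := by
    have key : ∀ k : ℕ, G.edist (w₂.getVert (ℓ - 3)) v ≤ (k : ℕ∞) → ℓ + 1 ≤ k + 1 + i₀ := by
      intro k hk
      have hfin : ((ℓ + 1 : ℕ) : ℕ∞) ≤ ((k + 1 + i₀ : ℕ) : ℕ∞) := by
        calc ((ℓ + 1 : ℕ) : ℕ∞) = (ℓ : ℕ∞) + 1 := by push_cast; ring
          _ ≤ G.edist (w₂.getVert (ℓ - 3)) a := hexA
          _ ≤ G.edist (w₂.getVert (ℓ - 3)) v + G.edist v a := G.edist_triangle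
          _ ≤ G.edist (w₂.getVert (ℓ - 3)) v + (G.edist v u + G.edist u a) :=
              add_le_add_right G.edist_triangle _
          _ ≤ (k : ℕ∞) + (1 + (i₀ : ℕ∞)) := by
              have e5 : G.edist v u ≤ 1 := (edist_comm (G := G) .. ▸ d5)
              have e1 : G.edist u a ≤ (i₀ : ℕ∞) := (edist_comm (G := G) .. ▸ d1)
              gcongr
          _ = ((k + 1 + i₀ : ℕ) : ℕ∞) := by push_cast; ring
      exact_mod_cast hfin
    rcases le_or_gt j (ℓ - 3) with hj | hj
    · exfalso
      have dcv : G.edist (w₂.getVert (ℓ - 3)) v ≤ ((ℓ - 3 - j : ℕ) : ℕ∞) := by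
        have := edist_getVert_le_sub w₂ hj
        rw [hvj] at this
        exact (edist_comm (G := G) .. ▸ this)
      have h6 := key _ dcv
      have h7 : i₀ + 3 ≤ j := by exact_mod_cast hA.trans d3
      omega
    · have dcv : G.edist (w₂.getVert (ℓ - 3)) v ≤ ((j - (ℓ - 3) : ℕ) : ℕ∞) := by
        have := edist_getVert_le_sub w₂ hj.le
        rwa [hvj] at this
      have h6 := key _ dcv
      omega
  -- conclusion
  have tri : G.edist a b ≤ G.edist a u + G.edist u v + G.edist v b := by
    calc G.edist a b ≤ G.edist a u + G.edist u b := G.edist_triangle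
      _ ≤ G.edist a u + (G.edist u v + G.edist v b) := add_le_add_right G.edist_triangle _
      _ = G.edist a u + G.edist u v + G.edist v b := (add_assoc _ _ _).symm
  calc G.edist a b + 2 ≤ (G.edist a u + G.edist u v + G.edist v b) + 2 := by gcongr
    _ ≤ ((i₀ : ℕ∞) + 1 + G.edist v b) + 2 := by gcongr
    _ = ((i₀ + 3 : ℕ) : ℕ∞) + G.edist v b := by push_cast; ring
    _ ≤ ((ℓ : ℕ) : ℕ∞) + G.edist v b := by
        gcongr
        exact_mod_cast (by omega : i₀ + 3 ≤ ℓ)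
    _ ≤ ((ℓ : ℕ) : ℕ∞) + ((w₂.length - j : ℕ) : ℕ∞) := by gcongr
    _ = ((ℓ + (w₂.length - j) : ℕ) : ℕ∞) := by push_cast; ring
    _ ≤ (w₂.length : ℕ∞) := by exact_mod_cast (by omega : ℓ + (w₂.length - j) ≤ w₂.length)
    _ ≤ G.edist a' b := length_le_edist w₂ hw₂min

/-- Lemma `acyclic`: for an independent pair `A, B` in the graph restricted to
the vertices of the `AB`-paths, the escape graph of every `b ∈ B` has no directed cycle. -/
theorem stmt15 (d ℓ : ℕ) {V : Type*} [LinearOrder (Sym2 V)]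
    (G : SimpleGraph V) (A B : Finset V) (P : V → V → List V)
    (hP : IsMinPathFamily G A B P)
    (hind : IndependentPair G ℓ d A B P)
    (hrestr : ∀ v : V, ∃ a ∈ A, ∃ b ∈ B, v ∈ P a b)
    (b : V) (hb : b ∈ B) :
    ∀ (n : ℕ) (f : ℕ → V), 0 < n →
      (∀ i < n, EscapeArc G ℓ A B P b (f i) (f (i + 1))) → f 0 ≠ f n := by
  intro n f hn harcs heq
  have key : ∀ i < n, G.edist (f i) b + 2 ≤ G.edist (f (i + 1)) b :=
    fun i hi => arc_step G ℓ d A B P hP hind hb (harcs i hi)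
  have chain : ∀ i, i ≤ n → G.edist (f 0) b + 2 * (i : ℕ∞) ≤ G.edist (f i) b := by
    intro i
    induction i with
    | zero => intro _; simp
    | succ k ih =>
      intro hk
      calc G.edist (f 0) b + 2 * ((k + 1 : ℕ) : ℕ∞)
          = (G.edist (f 0) b + 2 * (k : ℕ∞)) + 2 := by push_cast; ring
        _ ≤ G.edist (f k) b + 2 := add_le_add_left (ih (by omega)) 2
        _ ≤ G.edist (f (k + 1)) b := key k (by omega)
  have hf0A : f 0 ∈ A := (harcs 0 hn).1
  obtain ⟨w, -, -⟩ := hP (f 0) hf0A b hb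
  have hfin : G.edist (f 0) b ≠ ⊤ := by
    intro h
    have hle : G.edist (f 0) b ≤ (w.length : ℕ∞) := edist_le w
    rw [h] at hle
    exact (ENat.coe_ne_top w.length) (top_le_iff.mp hle)
  have hchain := chain n (le_refl n)
  rw [← heq] at hchain
  lift G.edist (f 0) b to ℕ using hfin with m hm
  have hnat : m + 2 * n ≤ m := by exact_mod_cast hchain
  omega
end
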